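/- Let n ≥ 2, k ≥ 2, and fix any orientation section σ. Then every element of the image of p←_k − p→_k : M_k → M_{k−1} has a preimage in M_k all of whose coordinates are nonnegative. -/

import Mathlib

open List

/-- A letter of the free group `F_n`: a generator index together with a sign. -/
abbrev Letter (n : ℕ) := Fin n × Bool

/-- The inverse of a letter. -/
def linv {n : ℕ} (a : Letter n) : Letter n := (a.1, !a.2)

@[simp] lemma linv_linv {n : ℕ} (a : Letter n) : linv (linv a) = a := by
  cases a with
  | mk x b => simp [linv]

/-- The (formal) inverse of a word. -/
def wInv {n : ℕ} (w : List (Letter n)) : List (Letter n) := (w.map linv).reverse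

@[simp] lemma wInv_wInv {n : ℕ} (w : List (Letter n)) : wInv (wInv w) = w := by
  simp [wInv, Function.comp_def]

/-- A word is reduced if no two consecutive letters are mutually inverse. -/
def Reduced {n : ℕ} (w : List (Letter n)) : Prop :=
  List.Chain' (fun a b => b ≠ linv a) w

/-- A word is cyclically reduced if it is reduced and its first and last letters
are not mutually inverse. -/
def CyclicallyReduced {n : ℕ} (w : List (Letter n)) : Prop :=
  Reduced w ∧ ∀ a b, w.head? = some a → w.getLast? = some b → a ≠ linv b

/-- `lpow l m` is the `m`-fold concatenation of the list `l` with itself. -/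
def lpow {α : Type*} (l : List α) : ℕ → List α
  | 0 => []
  | m + 1 => l ++ lpow l m

/-- The number of oriented occurrences of `u` in the cyclic word represented by `w`. -/
def orientedOcc {n : ℕ} (u w : List (Letter n)) : ℕ :=
  ((Finset.range w.length).filter (fun i => u <+: lpow (w.rotate i) (u.length + 1))).card

/-- `occ u w` : occurrences of the unoriented word `{u, u⁻¹}` in the cyclic word
represented by `w`. -/
def occ {n : ℕ} (u w : List (Letter n)) : ℕ :=
  orientedOcc u w + orientedOcc (wInv u) w

lemma occ_wInv {n : ℕ} (u w : List (Letter n)) : occ (wInv u) w = occ u w := by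
  simp [occ, wInv_wInv, Nat.add_comm]

/-- Occurrences of `u` as a contiguous factor of `w`. -/
def factOcc {n : ℕ} (u w : List (Letter n)) : ℕ :=
  ((Finset.range (w.length + 1)).filter (fun i => u <+: w.drop i)).card

/-- `occf u w` : occurrences of `{u, u⁻¹}` as a contiguous factor of `w`. -/
def occf {n : ℕ} (u w : List (Letter n)) : ℕ := factOcc u w + factOcc (wInv u) w

/-- Two cyclically reduced words represent the same cyclic word iff one is a
rotation of the other or of its inverse. -/
def SameCyclicWord {n : ℕ} (v w : List (Letter n)) : Prop :=
  (∃ i, w = v.rotate i) ∨ (∃ i, w = (wInv v).rotate i)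

/-- Cyclic reduction: repeatedly delete the first and last letter while they are
mutually inverse. -/
def cyclicReduce {n : ℕ} : List (Letter n) → List (Letter n)
  | [] => []
  | a :: rest =>
    if rest.getLast? = some (linv a) then cyclicReduce rest.dropLast
    else a :: rest
  termination_by w => w.length
  decreasing_by simp [List.length_dropLast]

/-- Oriented reduced words of length `k`. -/
structure RW (n k : ℕ) where
  val : List (Letter n)
  red : Reduced val
  len : val.length = k

instance (n k : ℕ) : DecidableEq (RW n k) := fun a b =>
  decidable_of_iff (a.val = b.val)
    ⟨fun h => by cases a; cases b; cases h; rfl, fun h => congrArg RW.val h⟩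

/-- Identify a reduced word with its inverse: the quotient is the set `W_k` of
unoriented words of length `k`. -/
instance uwSetoid (n k : ℕ) : Setoid (RW n k) where
  r u v := v.val = u.val ∨ v.val = wInv u.val
  iseqv := by
    refine ⟨fun u => Or.inl rfl, ?_, ?_⟩
    · rintro u v (h | h)
      · exact Or.inl h.symm
      · exact Or.inr (by rw [h, wInv_wInv])
    · rintro u v w (h1 | h1) (h2 | h2)
      · exact Or.inl (h2.trans h1)
      · exact Or.inr (h2.trans (congrArg wInv h1))
      · exact Or.inr (h2.trans h1)
      · exact Or.inl (by rw [h2, h1, wInv_wInv])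

instance (n k : ℕ) : ∀ a b : RW n k, Decidable (a ≈ b) := fun a b =>
  show Decidable (b.val = a.val ∨ b.val = wInv a.val) from inferInstance

/-- `W_k` : unoriented reduced words of length `k`. -/
abbrev UW (n k : ℕ) := Quotient (uwSetoid n k)

def toVec (n k : ℕ) (u : RW n k) : List.Vector (Letter n) k := ⟨u.val, u.len⟩

lemma toVec_inj (n k : ℕ) : Function.Injective (toVec n k) := by
  intro a b h
  have h' : a.val = b.val := congrArg Subtype.val h
  cases a; cases b; cases h'; rfl

noncomputable instance (n k : ℕ) : Fintype (RW n k) :=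
  Fintype.ofInjective _ (toVec_inj n k)

noncomputable example (n k : ℕ) : Fintype (UW n k) := inferInstance
noncomputable example (n k : ℕ) : DecidableEq (UW n k) := inferInstance

/-- `M_k` : the free ℤ-module on `W_k`, realized as functions `W_k → ℤ`. -/
abbrev Mk (n k : ℕ) := UW n k → ℤ

/-- `π_k` of the cyclic word represented by `w` : the vector of occurrence counts
of unoriented words of length `k`. -/
def pik (n k : ℕ) (w : List (Letter n)) : Mk n k :=
  Quotient.lift (fun u : RW n k => (occ u.val w : ℤ)) (by
    intro a b hab
    have h : occ a.val w = occ b.val w := by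
      rcases hab with h | h
      · rw [h]
      · rw [h, occ_wInv]
    show ((occ a.val w : ℕ) : ℤ) = ((occ b.val w : ℕ) : ℤ)
    rw [h])

lemma Reduced.drop' {n : ℕ} {w : List (Letter n)} (h : Reduced w) (m : ℕ) :
    Reduced (w.drop m) :=
  List.IsChain.suffix h (List.drop_suffix m w)

lemma Reduced.dropLast' {n : ℕ} {w : List (Letter n)} (h : Reduced w) :
    Reduced w.dropLast :=
  List.IsChain.prefix h (List.dropLast_prefix w)

/-- The unoriented `(k-1)`-suffix of an oriented word of length `k`. -/
def sufC {n k : ℕ} (w : RW n k) : UW n (k - 1) :=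
  Quotient.mk (uwSetoid n (k - 1)) ⟨w.val.drop 1, w.red.drop' 1, by simp [w.len]⟩

/-- The unoriented `(k-1)`-prefix of an oriented word of length `k`. -/
def preC {n k : ℕ} (w : RW n k) : UW n (k - 1) :=
  Quotient.mk (uwSetoid n (k - 1)) ⟨w.val.dropLast, w.red.dropLast', by simp [w.len]⟩

/-- Matrix of `p←_k` w.r.t. the orientation section `σ`: a basis element `w̄` of `M_k`
is sent to the sum of the unoriented `(k-1)`-words at its outward-pointing ends. -/
noncomputable def AOut (n k : ℕ) (σ : List (Letter n) → List (Letter n)) :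
    Matrix (UW n (k - 1)) (UW n k) ℤ := fun ub wb =>
  ∑ w : RW n k,
    if Quotient.mk (uwSetoid n k) w = wb ∧ σ w.val = w.val then
      ((if sufC w = ub ∧ σ (w.val.drop 1) = w.val.drop 1 then 1 else 0) +
       (if preC w = ub ∧ σ (w.val.dropLast) = wInv (w.val.dropLast) then 1 else 0))
    else 0

/-- Matrix of `p→_k` : inward-pointing ends. -/
noncomputable def AIn (n k : ℕ) (σ : List (Letter n) → List (Letter n)) :
    Matrix (UW n (k - 1)) (UW n k) ℤ := fun ub wb =>
  ∑ w : RW n k,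
    if Quotient.mk (uwSetoid n k) w = wb ∧ σ w.val = w.val then
      ((if sufC w = ub ∧ σ (w.val.drop 1) = wInv (w.val.drop 1) then 1 else 0) +
       (if preC w = ub ∧ σ (w.val.dropLast) = w.val.dropLast then 1 else 0))
    else 0

/-- `p←_k : M_k → M_{k-1}`. -/
noncomputable def pOut (n k : ℕ) (σ : List (Letter n) → List (Letter n)) :
    Mk n k →ₗ[ℤ] Mk n (k - 1) := (AOut n k σ).mulVecLin

/-- `p→_k : M_k → M_{k-1}`. -/
noncomputable def pIn (n k : ℕ) (σ : List (Letter n) → List (Letter n)) :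
    Mk n k →ₗ[ℤ] Mk n (k - 1) := (AIn n k σ).mulVecLin

/-! The constant vector `1` lies in the kernel of `p←_k - p→_k`, so a preimage `f` of `v` can be
shifted to the nonnegative preimage `f + c • 1` for `c` large. To see `p←_k 1 = p→_k 1` at an
unoriented word `{u, u⁻¹}` with `σ u = u`, pair each σ-chosen word `w` with `w⁻¹`: this turns the
prefix end of `w` into the suffix end of `w⁻¹`, so the outward ends equal to `{u, u⁻¹}` are counted
by the reduced words with suffix `u`, and the inward ones by those with suffix `u⁻¹`. Both numbers
are `2n - 1`, the number of letters that may precede a reduced word. -/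

theorem LinearMap.exists_nonneg_preimage_of_map_one_eq_zero {R ι M : Type*} [Ring R]
    [LinearOrder R] [IsOrderedRing R] [Fintype ι] [AddCommMonoid M] [Module R M]
    (φ : (ι → R) →ₗ[R] M) (hφ : φ 1 = 0) (f : ι → R) :
    ∃ g : ι → R, (∀ i, 0 ≤ g i) ∧ φ g = φ f := by
  refine ⟨f + (∑ i, |f i|) • 1, fun i => ?_, by rw [map_add, map_smul, hφ, smul_zero, add_zero]⟩
  have : |f i| ≤ ∑ j, |f j| :=
    Finset.single_le_sum (fun j _ => abs_nonneg (f j)) (Finset.mem_univ i)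
  simp only [Pi.add_apply, Pi.smul_apply, Pi.one_apply, smul_eq_mul, mul_one]
  exact neg_le_iff_add_nonneg'.mp ((neg_le_abs (f i)).trans this)

theorem Function.Involutive.sum_ite_add_comp {α M : Type*} [Fintype α] [AddCommMonoid M]
    {ι : α → α} (hι : Function.Involutive ι) {p : α → Prop} [DecidablePred p]
    (hp : ∀ x, p (ι x) ↔ ¬ p x) (f : α → M) :
    ∑ x, (if p x then f x + f (ι x) else 0) = ∑ x, f x := by
  have hswap : ∑ x, (if p x then f (ι x) else 0) = ∑ x, if ¬ p x then f x else 0 := by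
    rw [← Equiv.sum_comp (hι.toPerm ι) (fun x => if ¬ p x then f x else 0)]
    simp only [Function.Involutive.coe_toPerm, hp, not_not]
  rw [Finset.sum_congr rfl fun x _ => ite_add_zero, Finset.sum_add_distrib, hswap,
    ← Finset.sum_add_distrib]
  exact Finset.sum_congr rfl fun x _ => by by_cases h : p x <;> simp [h]

section Words
variable {n : ℕ}

lemma linv_ne_self (a : Letter n) : linv a ≠ a := by
  obtain ⟨x, b⟩ := a
  simp [linv]

lemma eq_linv_comm {a b : Letter n} : a = linv b ↔ b = linv a := by
  constructor <;> (rintro rfl; simp)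

lemma eq_wInv_comm {u v : List (Letter n)} : u = wInv v ↔ v = wInv u := by
  constructor <;> (rintro rfl; simp)

@[simp] lemma length_wInv (w : List (Letter n)) : (wInv w).length = w.length := by
  simp [wInv]

lemma drop_one_wInv (w : List (Letter n)) : (wInv w).drop 1 = wInv w.dropLast := by
  rw [wInv, wInv, List.drop_one, List.tail_reverse, List.map_dropLast]

lemma Reduced.ne_wInv_self {w : List (Letter n)} (hr : Reduced w) (hw : w ≠ []) :
    w ≠ wInv w := by
  intro h
  have hsymm : ∀ i (hi : i < w.length), w[i] = linv w[w.length - 1 - i] := by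
    intro i hi
    have := congrArg (·[i]?) h
    simpa [wInv, List.getElem?_reverse, hi] using this
  have hl := List.length_pos_iff.mpr hw
  have key := hsymm ((w.length - 1) / 2) (by omega)
  -- the two middle positions of `w` coincide (odd length) or are adjacent (even length)
  obtain hm | hm : w.length - 1 - (w.length - 1) / 2 = (w.length - 1) / 2 ∨
      w.length - 1 - (w.length - 1) / 2 = (w.length - 1) / 2 + 1 := by omega
  · simp only [hm] at key
    exact linv_ne_self _ key.symm
  · simp only [hm] at key
    exact List.isChain_iff_getElem.mp hr ((w.length - 1) / 2) (by omega) (by rw [key, linv_linv])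

lemma Reduced.wInv {w : List (Letter n)} (h : Reduced w) : Reduced (wInv w) := by
  change List.IsChain _ _ at h ⊢
  rw [_root_.wInv, List.isChain_reverse, List.isChain_map]
  exact h.imp fun a b hab hc => hab (by rw [hc, linv_linv])

end Words

namespace RW
variable {n k : ℕ}

lemma val_injective : Function.Injective (RW.val : RW n k → List (Letter n)) := by
  rintro ⟨v, _, _⟩ ⟨w, _, _⟩ rfl
  rfl

lemma val_ne_nil (w : RW n k) (hk : k ≠ 0) : w.val ≠ [] := by
  rw [← List.length_pos_iff, w.len]
  omega

def inv (w : RW n k) : RW n k := ⟨wInv w.val, w.red.wInv, by simp [w.len]⟩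

@[simp] lemma inv_val (w : RW n k) : w.inv.val = wInv w.val := rfl

lemma inv_involutive : Function.Involutive (inv : RW n k → RW n k) :=
  fun w => val_injective (by simp)

lemma mk_inv (w : RW n k) : (⟦w.inv⟧ : UW n k) = ⟦w⟧ :=
  Quotient.sound (Or.inr (wInv_wInv w.val).symm)

lemma sufC_inv (w : RW n k) : sufC w.inv = preC w :=
  Quotient.sound (Or.inr (by simp only [inv_val, drop_one_wInv, wInv_wInv]))

lemma sufC_eq_mk_iff {w : RW n k} {u : RW n (k - 1)} :
    sufC w = ⟦u⟧ ↔ w.val.drop 1 = u.val ∨ w.val.drop 1 = wInv u.val := by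
  rw [sufC, Quotient.eq]
  change u.val = _ ∨ u.val = wInv _ ↔ _
  rw [eq_comm, eq_wInv_comm]

end RW

open Finset in
lemma card_filter_drop_one_eq {n k : ℕ} (hk : 2 ≤ k) {v : List (Letter n)} (hv : Reduced v)
    (hl : v.length = k - 1) : #{w : RW n k | w.val.drop 1 = v} = 2 * n - 1 := by
  obtain ⟨b, t, rfl⟩ := List.exists_cons_of_ne_nil (l := v) (by rintro rfl; simp at hl; omega)
  have hcard : #(univ.erase (linv b)) = 2 * n - 1 := by
    rw [card_erase_of_mem (mem_univ _), card_univ]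
    simp [Fintype.card_prod]
    omega
  rw [← hcard, eq_comm]
  refine card_bij (fun a ha => ⟨a :: b :: t, List.isChain_cons_cons.mpr
      ⟨fun h => (mem_erase.mp ha).1 (eq_linv_comm.mp h), hv⟩, by simp at hl ⊢; omega⟩)
    (fun a _ => by simp) (fun a _ a' _ h => by simpa using congrArg RW.val h) ?_
  intro w hw
  obtain ⟨a, ha⟩ : ∃ a, w.val = a :: b :: t := by
    rcases hval : w.val with _ | ⟨a, r⟩
    · simp [hval] at hw
    · simp only [Finset.mem_filter, hval] at hw
      exact ⟨a, by simpa using hw⟩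
  have hred := w.red
  rw [Reduced, ha] at hred
  exact ⟨a, mem_erase.mpr ⟨fun h => (List.isChain_cons_cons.mp hred).1 (eq_linv_comm.mp h),
    mem_univ _⟩, RW.val_injective ha.symm⟩

def outSuffix {n k : ℕ} (σ : List (Letter n) → List (Letter n)) (ub : UW n (k - 1))
    (w : RW n k) : ℤ :=
  if sufC w = ub ∧ σ (w.val.drop 1) = w.val.drop 1 then 1 else 0

def inSuffix {n k : ℕ} (σ : List (Letter n) → List (Letter n)) (ub : UW n (k - 1))
    (w : RW n k) : ℤ :=
  if sufC w = ub ∧ σ (w.val.drop 1) = wInv (w.val.drop 1) then 1 else 0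

section Orientation
open Matrix
variable {n k : ℕ} {σ : List (Letter n) → List (Letter n)}

lemma sigma_wInv_eq_wInv_iff (hσ1 : ∀ u : List (Letter n), σ u = u ∨ σ u = wInv u)
    (hσ2 : ∀ u : List (Letter n), σ (wInv u) = σ u) {u : List (Letter n)} (hr : Reduced u)
    (hu : u ≠ []) : σ (wInv u) = wInv u ↔ σ u ≠ u := by
  rw [hσ2]
  exact ⟨fun h h' => hr.ne_wInv_self hu (h'.symm.trans h), (hσ1 u).resolve_left⟩

lemma exists_mk_eq_and_sigma_eq (hσ1 : ∀ u : List (Letter n), σ u = u ∨ σ u = wInv u)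
    (hσ2 : ∀ u : List (Letter n), σ (wInv u) = σ u) (ub : UW n k) :
    ∃ u : RW n k, ⟦u⟧ = ub ∧ σ u.val = u.val := by
  obtain ⟨u, rfl⟩ := Quotient.exists_rep ub
  rcases hσ1 u.val with h | h
  · exact ⟨u, rfl, h⟩
  · exact ⟨u.inv, u.mk_inv, by rw [RW.inv_val, hσ2, h]⟩

lemma AOut_mulVec_one (hσ2 : ∀ u : List (Letter n), σ (wInv u) = σ u) (ub : UW n (k - 1)) :
    (AOut n k σ *ᵥ 1) ub = ∑ w : RW n k,
      if σ w.val = w.val then outSuffix σ ub w + outSuffix σ ub w.inv else 0 := by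
  simp only [mulVec, dotProduct, Pi.one_apply, mul_one, AOut]
  rw [Finset.sum_comm]
  refine Finset.sum_congr rfl fun w _ => ?_
  simp only [outSuffix, RW.sufC_inv, RW.inv_val, drop_one_wInv, hσ2]
  by_cases hc : σ w.val = w.val <;> simp [hc]

lemma AIn_mulVec_one (hσ2 : ∀ u : List (Letter n), σ (wInv u) = σ u) (ub : UW n (k - 1)) :
    (AIn n k σ *ᵥ 1) ub = ∑ w : RW n k,
      if σ w.val = w.val then inSuffix σ ub w + inSuffix σ ub w.inv else 0 := by
  simp only [mulVec, dotProduct, Pi.one_apply, mul_one, AIn]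
  rw [Finset.sum_comm]
  refine Finset.sum_congr rfl fun w _ => ?_
  simp only [inSuffix, RW.sufC_inv, RW.inv_val, drop_one_wInv, hσ2, wInv_wInv]
  by_cases hc : σ w.val = w.val <;> simp [hc]

lemma outSuffix_mk (hσ2 : ∀ u : List (Letter n), σ (wInv u) = σ u) (hk : 2 ≤ k)
    {u : RW n (k - 1)} (hu : σ u.val = u.val) (w : RW n k) :
    outSuffix σ ⟦u⟧ w = if w.val.drop 1 = u.val then 1 else 0 := by
  have hne := u.red.ne_wInv_self (u.val_ne_nil (by omega))
  refine if_congr ?_ rfl rfl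
  rw [RW.sufC_eq_mk_iff]
  constructor
  · rintro ⟨h | h, hσ⟩
    · exact h
    · rw [h, hσ2, hu] at hσ
      exact absurd hσ hne
  · intro h
    exact ⟨Or.inl h, by rw [h, hu]⟩

lemma inSuffix_mk (hσ2 : ∀ u : List (Letter n), σ (wInv u) = σ u) (hk : 2 ≤ k)
    {u : RW n (k - 1)} (hu : σ u.val = u.val) (w : RW n k) :
    inSuffix σ ⟦u⟧ w = if w.val.drop 1 = wInv u.val then 1 else 0 := by
  have hne := u.red.ne_wInv_self (u.val_ne_nil (by omega))
  refine if_congr ?_ rfl rfl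
  rw [RW.sufC_eq_mk_iff]
  constructor
  · rintro ⟨h | h, hσ⟩
    · rw [h, hu] at hσ
      exact absurd hσ hne
    · exact h
  · intro h
    exact ⟨Or.inr h, by rw [h, hσ2, hu, wInv_wInv]⟩

lemma pOut_sub_pIn_apply_one (hσ1 : ∀ u : List (Letter n), σ u = u ∨ σ u = wInv u)
    (hσ2 : ∀ u : List (Letter n), σ (wInv u) = σ u) (hk : 2 ≤ k) :
    (pOut n k σ - pIn n k σ) 1 = 0 := by
  ext ub
  obtain ⟨u, rfl, hu⟩ := exists_mk_eq_and_sigma_eq hσ1 hσ2 ub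
  have hchosen (w : RW n k) : σ w.inv.val = w.inv.val ↔ ¬ σ w.val = w.val :=
    sigma_wInv_eq_wInv_iff hσ1 hσ2 w.red (w.val_ne_nil (by omega))
  change (AOut n k σ *ᵥ 1) ⟦u⟧ - (AIn n k σ *ᵥ 1) ⟦u⟧ = 0
  rw [sub_eq_zero, AOut_mulVec_one hσ2, AIn_mulVec_one hσ2,
    RW.inv_involutive.sum_ite_add_comp hchosen, RW.inv_involutive.sum_ite_add_comp hchosen]
  simp only [outSuffix_mk hσ2 hk hu, inSuffix_mk hσ2 hk hu, Finset.sum_boole]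
  rw [card_filter_drop_one_eq hk u.red u.len,
    card_filter_drop_one_eq hk u.red.wInv (by simp [u.len])]

end Orientation

theorem nonneg_preimage_general (n k : ℕ) (hk : 2 ≤ k)
    (σ : List (Letter n) → List (Letter n))
    (hσ1 : ∀ u : List (Letter n), σ u = u ∨ σ u = wInv u)
    (hσ2 : ∀ u : List (Letter n), σ (wInv u) = σ u) :
    ∀ v : Mk n (k - 1), v ∈ LinearMap.range (pOut n k σ - pIn n k σ) →
      ∃ f : Mk n k, (∀ ub : UW n k, 0 ≤ f ub) ∧ (pOut n k σ - pIn n k σ) f = v := by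
  rintro v ⟨f, rfl⟩
  exact LinearMap.exists_nonneg_preimage_of_map_one_eq_zero _
    (pOut_sub_pIn_apply_one hσ1 hσ2 hk) f

/-- Every element of the image of `p←_k - p→_k` has a nonnegative
preimage. -/
theorem nonneg_preimage (n k : ℕ) (hn : 2 ≤ n) (hk : 2 ≤ k)
    (σ : List (Letter n) → List (Letter n))
    (hσ1 : ∀ u : List (Letter n), σ u = u ∨ σ u = wInv u)
    (hσ2 : ∀ u : List (Letter n), σ (wInv u) = σ u) :
    ∀ v : Mk n (k - 1), v ∈ LinearMap.range (pOut n k σ - pIn n k σ) →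
      ∃ f : Mk n k, (∀ ub : UW n k, 0 ≤ f ub) ∧ (pOut n k σ - pIn n k σ) f = v :=
  nonneg_preimage_general n k hk σ hσ1 hσ2
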